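/- arXiv:2107.03542 — 5 statements merged into one kernel-verified Lean document; each statement's English description precedes it below -/
import Mathlib

section
/- Let d_P, d_R be positive integers and let ρ be a Hermitian positive semidefinite matrix of trace 1 indexed by Fin d_P × Fin d_R, with eigenvalues p_1 ≥ p_2 ≥ … ≥ p_{d_P d_R} listed in decreasing order (with multiplicity), and set q_m = ∑_{j=1}^{d_R} p_{(m-1)d_R + j} for 1 ≤ m ≤ d_P. Then there exists a unitary matrix V of size d_P d_R such that the partial trace over R of V ρ V† equals the diagonal matrix diag(q_1, …, q_{d_P}); consequently the von Neumann entropy of this reduced matrix equals -∑_{m=1}^{d_P} q_m log₂ q_m. -/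
open Finset ComplexOrder

/-- The index `(m-1)·d_R + j` (0-indexed: `m·d_R + j`) inside `Fin (d_P * d_R)`. -/
def blockIdx {dP dR : ℕ} (m : Fin dP) (j : Fin dR) : Fin (dP * dR) :=
  ⟨m.val * dR + j.val, by
    calc m.val * dR + j.val < m.val * dR + dR := Nat.add_lt_add_left j.isLt _
      _ = (m.val + 1) * dR := by ring
      _ ≤ dP * dR := Nat.mul_le_mul_right _ m.isLt⟩

/-- Partial trace over the second (R) factor. -/
noncomputable def ptraceR (dP dR : ℕ)
    (M : Matrix (Fin dP × Fin dR) (Fin dP × Fin dR) ℂ) :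
    Matrix (Fin dP) (Fin dP) ℂ :=
  fun m n => ∑ α : Fin dR, M (m, α) (n, α)

/-! Conjugating `ρ` by its eigenvector unitary and then permuting the basis puts `p (m·d_R + j)`
at the diagonal position `(m, j)`. The partial trace of a diagonal matrix is diagonal, with the
block sums `q m` as entries, and the eigenvalues of a diagonal Hermitian matrix are its diagonal
entries with multiplicity (both have the same characteristic polynomial), which gives the
entropy. -/

namespace Matrix

variable {n : Type*} [Fintype n] [DecidableEq n]

theorem submatrix_id_mem_unitaryGroup {α : Type*} [CommRing α] [StarRing α]
    {U : Matrix n n α} (hU : U ∈ unitaryGroup n α) (σ : Equiv.Perm n) :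
    U.submatrix σ id ∈ unitaryGroup n α := by
  rw [mem_unitaryGroup_iff, star_eq_conjTranspose, conjTranspose_submatrix,
    ← submatrix_mul _ _ _ _ _ Function.bijective_id, ← star_eq_conjTranspose,
    mem_unitaryGroup_iff.mp hU, submatrix_one_equiv]

theorem IsHermitian.exists_mem_unitaryGroup_conj_eq_diagonal {𝕜 : Type*} [RCLike 𝕜]
    {A : Matrix n n 𝕜} (hA : A.IsHermitian) (σ : Equiv.Perm n) :
    ∃ V ∈ unitaryGroup n 𝕜, V * A * star V = diagonal fun i => (hA.eigenvalues (σ i) : 𝕜) := by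
  set U : Matrix n n 𝕜 := (hA.eigenvectorUnitary : Matrix n n 𝕜)
  have hdiag : Uᴴ * A * U = diagonal (RCLike.ofReal ∘ hA.eigenvalues) := by
    simpa [Unitary.conjStarAlgAut_apply, star_eq_conjTranspose]
      using hA.conjStarAlgAut_star_eigenvectorUnitary
  refine ⟨Uᴴ.submatrix σ id,
    submatrix_id_mem_unitaryGroup (Unitary.star_mem hA.eigenvectorUnitary.2) σ, ?_⟩
  calc Uᴴ.submatrix σ id * A * star (Uᴴ.submatrix σ id)
      = Uᴴ.submatrix σ id * A.submatrix id id * U.submatrix id σ := by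
        rw [star_eq_conjTranspose, conjTranspose_submatrix, conjTranspose_conjTranspose,
          submatrix_id_id]
    _ = (Uᴴ * A * U).submatrix σ σ := by
        rw [← submatrix_mul _ _ _ _ _ Function.bijective_id,
          ← submatrix_mul _ _ _ _ _ Function.bijective_id]
    _ = _ := by rw [hdiag, submatrix_diagonal_equiv]; rfl

open Polynomial in
theorem IsHermitian.map_eigenvalues_diagonal {𝕜 : Type*} [RCLike 𝕜] (d : n → ℝ)
    (h : (diagonal fun i => (d i : 𝕜)).IsHermitian) :
    univ.val.map h.eigenvalues = univ.val.map d := by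
  have hroots := h.roots_charpoly_eq_eigenvalues
  rw [charpoly_diagonal, roots_prod _ _ (prod_ne_zero_iff.mpr fun i _ => X_sub_C_ne_zero _)]
    at hroots
  simp only [roots_X_sub_C, Multiset.bind_singleton, Function.comp_apply] at hroots
  simpa [Multiset.map_map] using congrArg (Multiset.map RCLike.re) hroots.symm

theorem IsHermitian.sum_comp_eigenvalues_diagonal {𝕜 : Type*} [RCLike 𝕜] (d : n → ℝ)
    (h : (diagonal fun i => (d i : 𝕜)).IsHermitian) (F : ℝ → ℝ) : ∑ i, F (h.eigenvalues i) = ∑ i, F (d i) := by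
  calc ∑ i, F (h.eigenvalues i) = ((univ.val.map h.eigenvalues).map F).sum := by
        rw [Multiset.map_map]; rfl
    _ = ((univ.val.map d).map F).sum := by rw [h.map_eigenvalues_diagonal]
    _ = ∑ i, F (d i) := by rw [Multiset.map_map]; rfl

end Matrix

theorem ptraceR_diagonal {dP dR : ℕ} (d : Fin dP × Fin dR → ℂ) :
    ptraceR dP dR (Matrix.diagonal d) = Matrix.diagonal fun m => ∑ α, d (m, α) := by
  ext m k
  by_cases hmk : m = k <;> simp [ptraceR, hmk]

theorem finProdFinEquiv_apply_eq_blockIdx {dP dR : ℕ} (m : Fin dP) (j : Fin dR) :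
    finProdFinEquiv (m, j) = blockIdx m j := by
  ext
  simp only [finProdFinEquiv_apply_val, blockIdx]
  ring

theorem stmt1_general (dP dR : ℕ)
    (ρ : Matrix (Fin dP × Fin dR) (Fin dP × Fin dR) ℂ)
    (hρ : ρ.PosSemidef)
    -- `p` lists the eigenvalues of `ρ` with multiplicity, in decreasing order
    (p : Fin (dP * dR) → ℝ)
    (hperm : ∃ e : Fin (dP * dR) ≃ (Fin dP × Fin dR),
      ∀ i, p i = hρ.isHermitian.eigenvalues (e i))
    (q : Fin dP → ℝ) (hq : ∀ m, q m = ∑ j : Fin dR, p (blockIdx m j)) :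
    ∃ V ∈ Matrix.unitaryGroup (Fin dP × Fin dR) ℂ,
      ptraceR dP dR (V * ρ * star V) = Matrix.diagonal (fun m => (q m : ℂ)) ∧
      ∀ h : (ptraceR dP dR (V * ρ * star V)).IsHermitian,
        -∑ i, h.eigenvalues i * Real.logb 2 (h.eigenvalues i)
          = -∑ m, q m * Real.logb 2 (q m) := by
  obtain ⟨e, hpe⟩ := hperm
  obtain ⟨V, hV, hVρ⟩ :=
    hρ.isHermitian.exists_mem_unitaryGroup_conj_eq_diagonal (finProdFinEquiv.trans e)
  have hreduced : ptraceR dP dR (V * ρ * star V) = Matrix.diagonal fun m => (q m : ℂ) := by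
    rw [hVρ, ptraceR_diagonal]
    simp [hq, hpe, finProdFinEquiv_apply_eq_blockIdx]
  refine ⟨V, hV, hreduced, ?_⟩
  rw [hreduced]
  intro h
  rw [h.sum_comp_eigenvalues_diagonal q fun x => x * Real.logb 2 x]

theorem stmt1 (dP dR : ℕ) (hdP : 0 < dP) (hdR : 0 < dR)
    (ρ : Matrix (Fin dP × Fin dR) (Fin dP × Fin dR) ℂ)
    (hρ : ρ.PosSemidef) (htr : ρ.trace = 1)
    -- `p` lists the eigenvalues of `ρ` with multiplicity, in decreasing order
    (p : Fin (dP * dR) → ℝ) (hmono : Antitone p)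
    (hperm : ∃ e : Fin (dP * dR) ≃ (Fin dP × Fin dR),
      ∀ i, p i = hρ.isHermitian.eigenvalues (e i))
    (q : Fin dP → ℝ) (hq : ∀ m, q m = ∑ j : Fin dR, p (blockIdx m j)) :
    ∃ V ∈ Matrix.unitaryGroup (Fin dP × Fin dR) ℂ,
      ptraceR dP dR (V * ρ * star V) = Matrix.diagonal (fun m => (q m : ℂ)) ∧
      ∀ h : (ptraceR dP dR (V * ρ * star V)).IsHermitian,
        -∑ i, h.eigenvalues i * Real.logb 2 (h.eigenvalues i)
          = -∑ m, q m * Real.logb 2 (q m) :=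
  stmt1_general dP dR ρ hρ p hperm q hq
end

section
/- Let d_P, d_R be positive integers and let ρ be a Hermitian positive semidefinite matrix of trace 1 indexed by Fin d_P × Fin d_R, with eigenvalues p_1 ≥ p_2 ≥ … ≥ p_{d_P d_R} listed in decreasing order (with multiplicity), and set q_m = ∑_{j=1}^{d_R} p_{(m-1)d_R + j} for 1 ≤ m ≤ d_P. Then for every unitary matrix U of size d_P d_R, the von Neumann entropy of the partial trace over R of U ρ U† is at least -∑_{m=1}^{d_P} q_m log₂ q_m. -/
open Finset ComplexOrder

open Real
open scoped Matrix Kronecker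

lemma negMulLog_le_tangent {a b : ℝ} (ha : 0 < a) (hb : 0 ≤ b) :
    negMulLog b ≤ negMulLog a - (log a + 1) * (b - a) := by
  have hsplit := negMulLog_mul a (b / a)
  rw [mul_div_cancel₀ b ha.ne'] at hsplit
  have hratio := negMulLog_le_one_sub_self (div_nonneg hb ha.le)
  calc negMulLog b ≤ b / a * negMulLog a + a * (1 - b / a) := by
        rw [hsplit]; gcongr
    _ = negMulLog a - (log a + 1) * (b - a) := by
        simp only [negMulLog]; field_simp; ring

lemma sum_range_mul_nonneg_of_sum_range_nonneg {c d : ℕ → ℝ} {n : ℕ}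
    (hd : ∀ k ≤ n, 0 ≤ ∑ i ∈ range k, d i) (htot : ∑ i ∈ range n, d i = 0)
    (hc : ∀ i, i + 1 < n → ∑ j ∈ range (i + 1), d j ≠ 0 → c (i + 1) ≤ c i) :
    0 ≤ ∑ i ∈ range n, c i * d i := by
  have habel := sum_range_by_parts c d n
  simp only [smul_eq_mul] at habel
  rw [habel, htot, mul_zero, zero_sub, neg_nonneg]
  refine sum_nonpos fun i hi => ?_
  have hi : i + 1 < n := by have := mem_range.1 hi; omega
  by_cases hD : ∑ j ∈ range (i + 1), d j = 0
  · rw [hD, mul_zero]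
  · exact mul_nonpos_of_nonpos_of_nonneg (sub_nonpos.2 (hc i hi hD)) (hd _ hi.le)

theorem sum_range_negMulLog_le_of_sum_range_le {n : ℕ} {a b : ℕ → ℝ}
    (ha0 : ∀ i < n, 0 ≤ a i) (hb0 : ∀ i < n, 0 ≤ b i) (ha : AntitoneOn a (Set.Iio n))
    (hpre : ∀ k ≤ n, ∑ i ∈ range k, a i ≤ ∑ i ∈ range k, b i)
    (htot : ∑ i ∈ range n, a i = ∑ i ∈ range n, b i) :
    ∑ i ∈ range n, negMulLog (b i) ≤ ∑ i ∈ range n, negMulLog (a i) := by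
  set D : ℕ → ℝ := fun k => ∑ i ∈ range k, (b i - a i) with hDdef
  have hD : ∀ k ≤ n, 0 ≤ D k := fun k hk => by
    simpa only [hDdef, sum_sub_distrib, sub_nonneg] using hpre k hk
  have hDn : D n = 0 := by simp only [hDdef, sum_sub_distrib, htot, sub_self]
  -- once `a` vanishes it stays zero, so `D` can no longer increase and must already be zero
  have hDzero : ∀ i < n, a i = 0 → ∀ k, i ≤ k → k ≤ n → D k = 0 := by
    intro i hi hai k hik hkn
    have htail : D n - D k = ∑ j ∈ Ico k n, b j := by
      change ∑ j ∈ range n, (b j - a j) - ∑ j ∈ range k, (b j - a j) = _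
      rw [← sum_range_add_sum_Ico _ hkn, add_sub_cancel_left]
      refine sum_congr rfl fun j hj => ?_
      obtain ⟨hkj, hjn⟩ := mem_Ico.1 hj
      have : a j ≤ a i := ha (hi : i ∈ Set.Iio n) (hjn : j ∈ Set.Iio n) (hik.trans hkj)
      rw [le_antisymm (hai ▸ this) (ha0 j hjn), sub_zero]
    have : 0 ≤ ∑ j ∈ Ico k n, b j := sum_nonneg fun j hj => hb0 j (mem_Ico.1 hj).2
    linarith [hD k hkn]
  have htangent : ∀ i ∈ range n,
      negMulLog (b i) ≤ negMulLog (a i) - (log (a i) + 1) * (b i - a i) := by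
    intro i hi
    have hi := mem_range.1 hi
    rcases (ha0 i hi).lt_or_eq with hpos | hzero
    · exact negMulLog_le_tangent hpos (hb0 i hi)
    · have hb : b i = a i := by
        have : D (i + 1) = D i := by
          rw [hDzero i hi hzero.symm i le_rfl hi.le, hDzero i hi hzero.symm (i + 1) (by omega) hi]
        simp only [hDdef, sum_range_succ, add_eq_left, sub_eq_zero] at this
        exact this
      simp [hb]
  have habel : 0 ≤ ∑ i ∈ range n, (log (a i) + 1) * (b i - a i) := by
    refine sum_range_mul_nonneg_of_sum_range_nonneg hD hDn fun i hi hDi => ?_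
    have hpos : 0 < a (i + 1) :=
      (ha0 _ hi).lt_of_ne fun h => hDi (hDzero _ hi h.symm _ le_rfl hi.le)
    have : log (a (i + 1)) ≤ log (a i) :=
      log_le_log hpos (ha (by simp; omega : i ∈ Set.Iio n) (hi : i + 1 ∈ Set.Iio n) (by omega))
    linarith
  calc ∑ i ∈ range n, negMulLog (b i)
      ≤ ∑ i ∈ range n, (negMulLog (a i) - (log (a i) + 1) * (b i - a i)) := sum_le_sum htangent
    _ ≤ ∑ i ∈ range n, negMulLog (a i) := by rw [sum_sub_distrib]; linarith

lemma filter_val_lt_eq_map_castLEEmb {n k : ℕ} (hk : k ≤ n) :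
    ({i : Fin n | i.val < k} : Finset (Fin n)) = univ.map (Fin.castLEEmb hk) := by
  ext i
  simp only [mem_filter, mem_univ, true_and, mem_map, Fin.castLEEmb_apply]
  exact ⟨fun hi => ⟨⟨i, hi⟩, rfl⟩, by rintro ⟨j, rfl⟩; exact j.isLt⟩

lemma card_filter_val_lt {n k : ℕ} (hk : k ≤ n) : #{i : Fin n | i.val < k} = k := by
  rw [filter_val_lt_eq_map_castLEEmb hk, card_map, card_univ, Fintype.card_fin]

lemma sum_range_dite_eq_sum_filter_val_lt {M : Type*} [AddCommMonoid M] {n k : ℕ} (hk : k ≤ n)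
    (f : Fin n → M) :
    ∑ i ∈ range k, (if h : i < n then f ⟨i, h⟩ else 0) = ∑ i with i.val < k, f i := by
  rw [filter_val_lt_eq_map_castLEEmb hk, sum_map, ← Fin.sum_univ_eq_sum_range]
  exact sum_congr rfl fun i _ => dif_pos (i.isLt.trans_le hk)

theorem sum_negMulLog_le_of_sum_le_sum_val_lt {n : ℕ} {a b : Fin n → ℝ}
    (ha0 : ∀ i, 0 ≤ a i) (hb0 : ∀ i, 0 ≤ b i)
    (hsub : ∀ T : Finset (Fin n), ∑ i ∈ T, a i ≤ ∑ i with i.val < #T, b i)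
    (htot : ∑ i, a i = ∑ i, b i) :
    ∑ i, negMulLog (b i) ≤ ∑ i, negMulLog (a i) := by
  set σ := Tuple.sort (OrderDual.toDual ∘ a)
  have hσ : Antitone (a ∘ σ) := Tuple.monotone_sort (OrderDual.toDual ∘ a)
  let extend : (Fin n → ℝ) → ℕ → ℝ := fun f i => if h : i < n then f ⟨i, h⟩ else 0
  have hfull : ∀ f : Fin n → ℝ, ∑ i ∈ range n, negMulLog (extend f i) = ∑ i, negMulLog (f i) :=
    fun f => by
      rw [← Fin.sum_univ_eq_sum_range]
      exact sum_congr rfl fun i _ => by simp only [extend, dif_pos i.isLt]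
  have hpre : ∀ k ≤ n, ∑ i ∈ range k, extend (a ∘ σ) i ≤ ∑ i ∈ range k, extend b i := by
    intro k hk
    simp only [extend, sum_range_dite_eq_sum_filter_val_lt hk]
    have hcard : #(({i : Fin n | i.val < k} : Finset (Fin n)).map σ.toEmbedding) = k := by
      rw [card_map, card_filter_val_lt hk]
    have := hsub (({i : Fin n | i.val < k} : Finset (Fin n)).map σ.toEmbedding)
    rwa [sum_map, hcard] at this
  have htot' : ∑ i ∈ range n, extend (a ∘ σ) i = ∑ i ∈ range n, extend b i := by
    simp only [extend, sum_range_dite_eq_sum_filter_val_lt le_rfl]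
    simpa [filter_true_of_mem, Equiv.sum_comp σ a] using htot
  have key := sum_range_negMulLog_le_of_sum_range_le (a := extend (a ∘ σ)) (b := extend b)
    (fun i hi => by simp only [extend, dif_pos hi]; exact ha0 _)
    (fun i hi => by simp only [extend, dif_pos hi]; exact hb0 _)
    (fun i hi j hj hij => by
      simp only [extend, dif_pos (show i < n from hi), dif_pos (show j < n from hj)]
      exact hσ (Fin.mk_le_mk.2 hij))
    hpre htot'
  rw [hfull, hfull] at key
  simpa only [Function.comp_apply, Equiv.sum_comp σ (fun i => negMulLog (a i))] using key

lemma neg_sum_mul_logb_two_eq {ι : Type*} [Fintype ι] (x : ι → ℝ) :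
    -∑ i, x i * logb 2 (x i) = (∑ i, negMulLog (x i)) / log 2 := by
  simp only [logb, negMulLog, sum_div, ← sum_neg_distrib]
  exact sum_congr rfl fun i _ => by ring

lemma exists_separating_of_forall_le {ι : Type*} [Fintype ι] {p : ι → ℝ} {S : Finset ι}
    (hS : ∀ i ∈ S, ∀ j ∉ S, p j ≤ p i) :
    ∃ θ, (∀ i ∈ S, θ ≤ p i) ∧ ∀ j ∉ S, p j ≤ θ := by
  rcases S.eq_empty_or_nonempty with rfl | hne
  · obtain ⟨θ, hθ⟩ := (Set.finite_range p).bddAbove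
    exact ⟨θ, by simp, fun j _ => hθ ⟨j, rfl⟩⟩
  · exact ⟨S.inf' hne p, fun i hi => inf'_le p hi,
      fun j hj => le_inf' hne p fun i hi => hS i hi j hj⟩

theorem sum_mul_le_sum_of_forall_le {ι : Type*} [Fintype ι] {p t : ι → ℝ} {S : Finset ι}
    (hS : ∀ i ∈ S, ∀ j ∉ S, p j ≤ p i) (ht0 : ∀ i, 0 ≤ t i) (ht1 : ∀ i, t i ≤ 1)
    (ht : ∑ i, t i = #S) :
    ∑ i, p i * t i ≤ ∑ i ∈ S, p i := by
  classical
  obtain ⟨θ, hθS, hθSc⟩ := exists_separating_of_forall_le hS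
  have hterm : ∀ i, p i * t i - (if i ∈ S then p i else 0)
      ≤ θ * (t i - if i ∈ S then 1 else 0) := by
    intro i
    split_ifs with hi
    · nlinarith [hθS i hi, ht1 i]
    · nlinarith [hθSc i hi, ht0 i]
  have hsum := sum_le_sum fun i (_ : i ∈ univ) => hterm i
  rw [sum_sub_distrib, ← mul_sum, sum_sub_distrib, sum_ite_mem, univ_inter, ht,
    sum_boole, filter_mem_eq_inter, univ_inter, sub_self, mul_zero] at hsum
  linarith

theorem sum_sum_mul_le_sum_val_lt {κ : Type*} [Fintype κ] {N r : ℕ} {p : Fin N → ℝ}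
    (hp : Antitone p) {c : κ → Fin N → ℝ} (hc0 : ∀ m i, 0 ≤ c m i)
    (hcol : ∀ i, ∑ m, c m i = 1) (hrow : ∀ m, ∑ i, c m i = r) (T : Finset κ) :
    ∑ m ∈ T, ∑ i, c m i * p i ≤ ∑ i with i.val < #T * r, p i := by
  have hN : #T * r ≤ N := by
    have : (N : ℝ) = Fintype.card κ * r := by
      calc (N : ℝ) = ∑ i : Fin N, ∑ m, c m i := by simp [hcol]
        _ = ∑ m, ∑ i, c m i := sum_comm
        _ = _ := by simp [hrow]
    exact (Nat.mul_le_mul_right r T.card_le_univ).trans (by exact_mod_cast this.symm.le)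
  set t : Fin N → ℝ := fun i => ∑ m ∈ T, c m i
  calc ∑ m ∈ T, ∑ i, c m i * p i = ∑ i, p i * t i := by
        rw [sum_comm]; simp only [t, mul_sum, mul_comm]
    _ ≤ _ := by
      refine sum_mul_le_sum_of_forall_le (fun i hi j hj => hp ?_)
        (fun i => sum_nonneg fun m _ => hc0 m i)
        (fun i => (sum_le_sum_of_subset_of_nonneg (subset_univ T) fun m _ _ => hc0 m i).trans
          (hcol i).le) ?_
      · simp only [mem_filter, mem_univ, true_and, not_lt] at hi hj
        exact Fin.le_def.2 (hi.le.trans hj)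
      · rw [card_filter_val_lt hN, sum_comm, sum_congr rfl fun m _ => hrow m, sum_const,
          nsmul_eq_mul]
        push_cast; ring

lemma blockIdx_eq_finProdFinEquiv {dP dR : ℕ} (m : Fin dP) (j : Fin dR) :
    blockIdx m j = finProdFinEquiv (m, j) :=
  Fin.ext (by simp [blockIdx, finProdFinEquiv_apply_val, mul_comm, add_comm])

lemma blockIdx_val_lt_mul_iff {dP dR : ℕ} (m : Fin dP) (j : Fin dR) (k : ℕ) :
    (blockIdx m j).val < k * dR ↔ m.val < k := by
  change m.val * dR + j.val < k * dR ↔ m.val < k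
  constructor
  · intro h
    by_contra! hk
    nlinarith [Nat.mul_le_mul_right dR hk]
  · intro h
    nlinarith [Nat.mul_le_mul_right dR (Nat.succ_le_of_lt h), j.isLt]

lemma sum_val_lt_mul_eq_sum_blockIdx {dP dR : ℕ} (p : Fin (dP * dR) → ℝ) (k : ℕ) :
    ∑ i with i.val < k * dR, p i = ∑ m with m.val < k, ∑ j, p (blockIdx m j) := by
  rw [sum_filter, sum_filter, ← Equiv.sum_comp finProdFinEquiv, Fintype.sum_prod_type]
  refine sum_congr rfl fun m _ => ?_
  simp only [← blockIdx_eq_finProdFinEquiv, blockIdx_val_lt_mul_iff]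
  split_ifs <;> simp

namespace Matrix
variable {𝕜 m n : Type*} [RCLike 𝕜] [Fintype n] [DecidableEq n]

lemma sum_norm_sq_row_eq_one {U : Matrix n n 𝕜} (hU : U ∈ unitaryGroup n 𝕜) (i : n) :
    ∑ j, ‖U i j‖ ^ 2 = 1 := by
  have hdiag : (U * Uᴴ) i i = 1 := by
    rw [← star_eq_conjTranspose, Unitary.mul_star_self_of_mem hU, one_apply_eq]
  simp only [mul_apply, conjTranspose_apply, ← starRingEnd_apply, RCLike.mul_conj] at hdiag
  exact_mod_cast hdiag

lemma sum_norm_sq_col_eq_one {U : Matrix n n 𝕜} (hU : U ∈ unitaryGroup n 𝕜) (j : n) :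
    ∑ i, ‖U i j‖ ^ 2 = 1 := by
  simpa [star_apply, norm_star] using sum_norm_sq_row_eq_one (Unitary.star_mem hU) j

lemma mul_diagonal_mul_conjTranspose_apply_self (G : Matrix m n 𝕜) (μ : n → ℝ) (a : m) :
    (G * diagonal (fun j => (μ j : 𝕜)) * Gᴴ) a a = ((∑ j, μ j * ‖G a j‖ ^ 2 : ℝ) : 𝕜) := by
  rw [mul_apply]
  simp only [mul_diagonal, conjTranspose_apply]
  push_cast
  refine sum_congr rfl fun j _ => ?_
  rw [← RCLike.mul_conj, starRingEnd_apply]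
  ring

end Matrix

lemma ptraceR_kronecker_one_mul_mul {dP dR : ℕ} (A B : Matrix (Fin dP) (Fin dP) ℂ)
    (M : Matrix (Fin dP × Fin dR) (Fin dP × Fin dR) ℂ) :
    ptraceR dP dR ((A ⊗ₖ 1) * M * (B ⊗ₖ 1)) = A * ptraceR dP dR M * B := by
  ext m n
  simp only [ptraceR, Matrix.mul_apply, Matrix.kroneckerMap_apply, Matrix.one_apply,
    Fintype.sum_prod_type, mul_ite, mul_one, mul_zero, ite_mul, zero_mul, sum_ite_eq, sum_ite_eq',
    mem_univ, if_true, sum_mul, mul_sum]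
  rw [sum_comm]
  refine sum_congr rfl fun b _ => ?_
  rw [sum_comm]

lemma exists_unitary_eigenvalues_ptraceR_eq {dP dR : ℕ}
    {ρ U : Matrix (Fin dP × Fin dR) (Fin dP × Fin dR) ℂ} (hρ : ρ.IsHermitian)
    (hU : U ∈ Matrix.unitaryGroup (Fin dP × Fin dR) ℂ)
    (h : (ptraceR dP dR (U * ρ * star U)).IsHermitian) :
    ∃ G ∈ Matrix.unitaryGroup (Fin dP × Fin dR) ℂ,
      ∀ m, h.eigenvalues m = ∑ α, ∑ j, hρ.eigenvalues j * ‖G (m, α) j‖ ^ 2 := by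
  set W : Matrix (Fin dP) (Fin dP) ℂ := ↑h.eigenvectorUnitary
  set V : Matrix (Fin dP × Fin dR) (Fin dP × Fin dR) ℂ := ↑hρ.eigenvectorUnitary
  set Z : Matrix (Fin dP × Fin dR) (Fin dP × Fin dR) ℂ := W ⊗ₖ 1
  have hZ : Z ∈ Matrix.unitaryGroup (Fin dP × Fin dR) ℂ :=
    Matrix.kronecker_mem_unitary h.eigenvectorUnitary.2 (one_mem _)
  set G := star Z * U * V
  refine ⟨G, mul_mem (mul_mem (Unitary.star_mem hZ) hU) hρ.eigenvectorUnitary.2, fun m => ?_⟩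
  have hdiag : star W * ptraceR dP dR (U * ρ * star U) * W
      = Matrix.diagonal (RCLike.ofReal ∘ h.eigenvalues) := by
    rw [← Unitary.conjStarAlgAut_star_apply (S := ℂ), h.conjStarAlgAut_star_eigenvectorUnitary]
  have hconj : star W * ptraceR dP dR (U * ρ * star U) * W
      = ptraceR dP dR (G * Matrix.diagonal (fun j => RCLike.ofReal (hρ.eigenvalues j)) * Gᴴ) := by
    have hstarZ : star Z = star W ⊗ₖ 1 := by
      simp only [Z, Matrix.star_eq_conjTranspose, Matrix.conjTranspose_kronecker,
        Matrix.conjTranspose_one]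
    conv_lhs => rw [hρ.spectral_theorem, Unitary.conjStarAlgAut_apply]
    rw [← ptraceR_kronecker_one_mul_mul, ← hstarZ, ← Matrix.star_eq_conjTranspose]
    simp only [G, star_mul, star_star, Matrix.mul_assoc]
    rfl
  have hm := congrFun (congrFun (hconj.symm.trans hdiag) m) m
  simp only [ptraceR, Matrix.mul_diagonal_mul_conjTranspose_apply_self,
    Matrix.diagonal_apply_eq, Function.comp_apply] at hm
  rw [← RCLike.ofReal_sum] at hm
  exact RCLike.ofReal_injective hm.symm

lemma exists_stochastic_eigenvalues_ptraceR_eq {dP dR : ℕ} {ι : Type*} [Fintype ι]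
    (e : ι ≃ Fin dP × Fin dR) {ρ U : Matrix (Fin dP × Fin dR) (Fin dP × Fin dR) ℂ}
    (hρ : ρ.IsHermitian) (hU : U ∈ Matrix.unitaryGroup (Fin dP × Fin dR) ℂ)
    (h : (ptraceR dP dR (U * ρ * star U)).IsHermitian) :
    ∃ c : Fin dP → ι → ℝ, (∀ m i, 0 ≤ c m i) ∧ (∀ i, ∑ m, c m i = 1) ∧
      (∀ m, ∑ i, c m i = dR) ∧ ∀ m, h.eigenvalues m = ∑ i, c m i * hρ.eigenvalues (e i) := by
  obtain ⟨G, hG, heig⟩ := exists_unitary_eigenvalues_ptraceR_eq hρ hU h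
  refine ⟨fun m i => ∑ α, ‖G (m, α) (e i)‖ ^ 2, fun m i => sum_nonneg fun α _ => sq_nonneg _,
    fun i => ?_, fun m => ?_, fun m => ?_⟩
  · rw [← Fintype.sum_prod_type' (f := fun m α => ‖G (m, α) (e i)‖ ^ 2)]
    exact Matrix.sum_norm_sq_col_eq_one hG (e i)
  · rw [sum_comm]
    calc ∑ α, ∑ i, ‖G (m, α) (e i)‖ ^ 2 = ∑ α : Fin dR, (1 : ℝ) :=
          sum_congr rfl fun α _ => by
            rw [Equiv.sum_comp e (fun j => ‖G (m, α) j‖ ^ 2), Matrix.sum_norm_sq_row_eq_one hG]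
      _ = dR := by simp
  · rw [heig m, sum_comm, ← Equiv.sum_comp e]
    simp only [mul_sum, mul_comm]

theorem stmt2_general (dP dR : ℕ)
    (ρ : Matrix (Fin dP × Fin dR) (Fin dP × Fin dR) ℂ)
    (hρ : ρ.PosSemidef)
    -- `p` lists the eigenvalues of `ρ` with multiplicity, in decreasing order
    (p : Fin (dP * dR) → ℝ) (hmono : Antitone p)
    (hperm : ∃ e : Fin (dP * dR) ≃ (Fin dP × Fin dR),
      ∀ i, p i = hρ.isHermitian.eigenvalues (e i))
    (q : Fin dP → ℝ) (hq : ∀ m, q m = ∑ j : Fin dR, p (blockIdx m j))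
    (U : Matrix (Fin dP × Fin dR) (Fin dP × Fin dR) ℂ)
    (hU : U ∈ Matrix.unitaryGroup (Fin dP × Fin dR) ℂ)
    (h : (ptraceR dP dR (U * ρ * star U)).IsHermitian) :
    -∑ m, q m * Real.logb 2 (q m)
      ≤ -∑ i, h.eigenvalues i * Real.logb 2 (h.eigenvalues i) := by
  obtain ⟨e, he⟩ := hperm
  obtain ⟨c, hc0, hcol, hrow, heig⟩ :=
    exists_stochastic_eigenvalues_ptraceR_eq e hρ.isHermitian hU h
  simp only [← he] at heig
  have hp0 : ∀ i, 0 ≤ p i := fun i => he i ▸ hρ.eigenvalues_nonneg (e i)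
  have hq_prefix : ∀ k, ∑ m with m.val < k, q m = ∑ i with i.val < k * dR, p i := fun k => by
    simp only [hq, sum_val_lt_mul_eq_sum_blockIdx]
  have hsub : ∀ T : Finset (Fin dP), ∑ m ∈ T, h.eigenvalues m ≤ ∑ m with m.val < #T, q m :=
    fun T => by simpa only [heig, hq_prefix] using sum_sum_mul_le_sum_val_lt hmono hc0 hcol hrow T
  have htot : ∑ m, h.eigenvalues m = ∑ m, q m := by
    have hall := hq_prefix dP
    rw [filter_true_of_mem fun m _ => m.isLt, filter_true_of_mem fun i _ => i.isLt] at hall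
    simp only [hall, heig]
    rw [sum_comm]
    simp only [← sum_mul, hcol, one_mul]
  rw [neg_sum_mul_logb_two_eq, neg_sum_mul_logb_two_eq]
  refine div_le_div_of_nonneg_right ?_ (log_pos one_lt_two).le
  exact sum_negMulLog_le_of_sum_le_sum_val_lt
    (fun m => heig m ▸ sum_nonneg fun i _ => mul_nonneg (hc0 m i) (hp0 i))
    (fun m => hq m ▸ sum_nonneg fun j _ => hp0 _) hsub htot

theorem stmt2 (dP dR : ℕ) (hdP : 0 < dP) (hdR : 0 < dR)
    (ρ : Matrix (Fin dP × Fin dR) (Fin dP × Fin dR) ℂ)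
    (hρ : ρ.PosSemidef) (htr : ρ.trace = 1)
    -- `p` lists the eigenvalues of `ρ` with multiplicity, in decreasing order
    (p : Fin (dP * dR) → ℝ) (hmono : Antitone p)
    (hperm : ∃ e : Fin (dP * dR) ≃ (Fin dP × Fin dR),
      ∀ i, p i = hρ.isHermitian.eigenvalues (e i))
    (q : Fin dP → ℝ) (hq : ∀ m, q m = ∑ j : Fin dR, p (blockIdx m j))
    (U : Matrix (Fin dP × Fin dR) (Fin dP × Fin dR) ℂ)
    (hU : U ∈ Matrix.unitaryGroup (Fin dP × Fin dR) ℂ)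
    (h : (ptraceR dP dR (U * ρ * star U)).IsHermitian) :
    -∑ m, q m * Real.logb 2 (q m)
      ≤ -∑ i, h.eigenvalues i * Real.logb 2 (h.eigenvalues i) :=
  stmt2_general dP dR ρ hρ p hmono hperm q hq U hU h
end

section
/- Let ρ be an n × n Hermitian matrix over ℂ with eigenvalues p_1, …, p_n (counted with multiplicity). Then there exists an n × n doubly stochastic real matrix B such that the vector of diagonal entries of ρ equals B applied to the vector (p_1, …, p_n); consequently the vector of diagonal entries of ρ is majorized by the vector of eigenvalues of ρ. -/
/-!
By the spectral theorem `ρ = U diag(p) U*` with `U` unitary, so `ρ i i = ∑ j, |U i j|² p j`, and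
`B i j = |U i j|²` is doubly stochastic because the rows and the columns of `U` are unit vectors.
For `x = B p` and any `k`-set `s`, `∑ i ∈ s, x i = ∑ j, c j * p j` with weights
`c j = ∑ i ∈ s, B i j ∈ [0, 1]` of total `k`; such a weighted sum is largest when the weights sit
on the `k` largest entries of `p`, which bounds it by the sum of those entries.
-/

open Finset

/-- The sum of the `k` largest entries of `v` (the maximum of `∑ i in s, v i`
over subsets `s` of cardinality `k`), via `sSup`. -/
noncomputable def kMaxSum {n : ℕ} (v : Fin n → ℝ) (k : ℕ) : ℝ :=
  sSup {t : ℝ | ∃ s : Finset (Fin n), s.card = k ∧ t = ∑ i ∈ s, v i}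

def Majorizes {n : ℕ} (x y : Fin n → ℝ) : Prop :=
  (∀ k : ℕ, 1 ≤ k → k ≤ n → kMaxSum x k ≤ kMaxSum y k) ∧ (∑ i, x i = ∑ i, y i)

open Matrix

section kMaxSum

variable {n : ℕ}

lemma bddAbove_sums_card_eq (v : Fin n → ℝ) (k : ℕ) :
    BddAbove {t : ℝ | ∃ s : Finset (Fin n), s.card = k ∧ t = ∑ i ∈ s, v i} :=
  ((Set.finite_range fun s : Finset (Fin n) => ∑ i ∈ s, v i).subset
    (by rintro t ⟨s, -, rfl⟩; exact ⟨s, rfl⟩)).bddAbove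

lemma sum_le_kMaxSum (v : Fin n → ℝ) {k : ℕ} (s : Finset (Fin n)) (hs : s.card = k) :
    ∑ i ∈ s, v i ≤ kMaxSum v k :=
  le_csSup (bddAbove_sums_card_eq v k) ⟨s, hs, rfl⟩

lemma kMaxSum_le (v : Fin n → ℝ) {k : ℕ} (hk : k ≤ n) {a : ℝ}
    (h : ∀ s : Finset (Fin n), s.card = k → ∑ i ∈ s, v i ≤ a) : kMaxSum v k ≤ a := by
  obtain ⟨s, -, hs⟩ := (univ : Finset (Fin n)).exists_subset_card_eq (by simpa using hk)
  exact csSup_le ⟨_, s, hs, rfl⟩ (by rintro t ⟨s, hs, rfl⟩; exact h s hs)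

end kMaxSum

section IsTopSet

variable {ι : Type*} [Fintype ι]

def IsTopSet {α : Type*} [LE α] (y : ι → α) (T : Finset ι) : Prop :=
  ∀ j ∈ T, ∀ i ∉ T, y i ≤ y j

lemma exists_isTopSet_card_eq {α : Type*} [LinearOrder α] (y : ι → α) {k : ℕ}
    (hk : k ≤ Fintype.card ι) : ∃ T : Finset ι, T.card = k ∧ IsTopSet y T := by
  classical
  induction k with
  | zero => exact ⟨∅, rfl, by simp [IsTopSet]⟩
  | succ k ih =>
    obtain ⟨T, hT, htop⟩ := ih (by omega)
    have hne : Tᶜ.Nonempty := by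
      rw [← card_pos, card_compl, hT]; omega
    obtain ⟨j₀, hj₀, hmax⟩ := exists_max_image _ y hne
    refine ⟨insert j₀ T, by rw [card_insert_of_notMem (mem_compl.mp hj₀), hT], ?_⟩
    intro j hj i hi
    have hiT : i ∉ T := fun h => hi (mem_insert_of_mem h)
    rcases mem_insert.mp hj with rfl | hjT
    · exact hmax i (mem_compl.mpr hiT)
    · exact htop j hjT i hiT

lemma sum_mul_le_sum_of_isTopSet {R : Type*} [CommRing R] [LinearOrder R] [IsStrictOrderedRing R]
    {y c : ι → R} {T : Finset ι} (hT : IsTopSet y T) (hTne : T.Nonempty)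
    (hc0 : ∀ j, 0 ≤ c j) (hc1 : ∀ j, c j ≤ 1) (hsum : ∑ j, c j = T.card) :
    ∑ j, c j * y j ≤ ∑ j ∈ T, y j := by
  classical
  obtain ⟨j₀, hj₀, hmin⟩ := T.exists_min_image y hTne
  set t := y j₀
  have termwise : ∀ j, c j * y j ≤ (if j ∈ T then y j - t else 0) + c j * t := by
    intro j
    by_cases h : j ∈ T
    · have := mul_nonneg (sub_nonneg.mpr (hc1 j)) (sub_nonneg.mpr (hmin j h))
      simp only [h, if_true]
      linarith
    · have := mul_nonneg (hc0 j) (sub_nonneg.mpr (hT j₀ hj₀ j h))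
      simp only [h, if_false, zero_add]
      linarith
  calc ∑ j, c j * y j ≤ ∑ j, ((if j ∈ T then y j - t else 0) + c j * t) :=
        sum_le_sum fun j _ => termwise j
    _ = ∑ j ∈ T, (y j - t) + (∑ j, c j) * t := by
        rw [sum_add_distrib, ← sum_mul, sum_ite_mem, univ_inter]
    _ = ∑ j ∈ T, y j := by
        rw [sum_sub_distrib, sum_const, hsum, nsmul_eq_mul]; ring

end IsTopSet

theorem majorizes_mulVec_of_mem_doublyStochastic {n : ℕ} {B : Matrix (Fin n) (Fin n) ℝ}
    (hB : B ∈ doublyStochastic ℝ (Fin n)) (y : Fin n → ℝ) : Majorizes (B *ᵥ y) y := by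
  refine ⟨fun k hk1 hkn => ?_, sum_mulVec_of_mem_doublyStochastic hB⟩
  obtain ⟨T, hT, htop⟩ := exists_isTopSet_card_eq y (k := k) (by simpa using hkn)
  refine kMaxSum_le _ hkn fun s hs => ?_
  have hc1 : ∀ j, ∑ i ∈ s, B i j ≤ 1 := fun j =>
    (sum_le_sum_of_subset_of_nonneg (subset_univ s) fun i _ _ =>
      nonneg_of_mem_doublyStochastic hB).trans (sum_col_of_mem_doublyStochastic hB j).le
  have hsum : ∑ j, ∑ i ∈ s, B i j = T.card := by
    rw [sum_comm, sum_congr rfl fun i _ => sum_row_of_mem_doublyStochastic hB i]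
    simp [hs, hT]
  calc ∑ i ∈ s, (B *ᵥ y) i = ∑ j, (∑ i ∈ s, B i j) * y j := by
        simp only [Matrix.mulVec, dotProduct, sum_mul]; exact sum_comm
    _ ≤ ∑ j ∈ T, y j := sum_mul_le_sum_of_isTopSet htop (card_pos.mp (by omega))
        (fun j => sum_nonneg fun i _ => nonneg_of_mem_doublyStochastic hB) hc1 hsum
    _ ≤ kMaxSum y k := sum_le_kMaxSum y T hT

namespace Matrix

variable {𝕜 n : Type*} [RCLike 𝕜] [Fintype n] [DecidableEq n]

theorem of_norm_sq_mem_doublyStochastic_of_mem_unitaryGroup {U : Matrix n n 𝕜}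
    (hU : U ∈ unitaryGroup n 𝕜) : of (fun i j => ‖U i j‖ ^ 2) ∈ doublyStochastic ℝ n := by
  refine mem_doublyStochastic_iff_sum.mpr
    ⟨fun i j => by simp only [of_apply]; positivity, fun i => ?_, fun j => ?_⟩
  · have h := congrFun (congrFun (mem_unitaryGroup_iff.mp hU) i) i
    simp only [mul_apply, star_apply, RCLike.star_def, RCLike.mul_conj, one_apply_eq] at h
    exact_mod_cast h
  · have h := congrFun (congrFun (mem_unitaryGroup_iff'.mp hU) j) j
    simp only [mul_apply, star_apply, RCLike.star_def, RCLike.conj_mul, one_apply_eq] at h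
    exact_mod_cast h

theorem mul_diagonal_mul_star_apply_self (U : Matrix n n 𝕜) (d : n → ℝ) (i : n) :
    (U * diagonal (RCLike.ofReal ∘ d) * star U : Matrix n n 𝕜) i i =
      ((∑ j, ‖U i j‖ ^ 2 * d j : ℝ) : 𝕜) := by
  simp only [mul_apply (M := U * _), mul_diagonal, star_apply, RCLike.star_def,
    Function.comp_apply]
  push_cast
  refine sum_congr rfl fun j _ => ?_
  rw [mul_right_comm, RCLike.mul_conj, mul_comm]

theorem IsHermitian.re_apply_self_eq_sum_norm_sq_mul_eigenvalues {A : Matrix n n 𝕜}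
    (hA : A.IsHermitian) (i : n) :
    RCLike.re (A i i) =
      ∑ j, ‖(hA.eigenvectorUnitary : Matrix n n 𝕜) i j‖ ^ 2 * hA.eigenvalues j := by
  conv_lhs => rw [hA.spectral_theorem, Unitary.conjStarAlgAut_apply,
    mul_diagonal_mul_star_apply_self, RCLike.ofReal_re]

end Matrix

theorem stmt4 (n : ℕ) (ρ : Matrix (Fin n) (Fin n) ℂ) (hρ : ρ.IsHermitian) :
    (∃ B : Matrix (Fin n) (Fin n) ℝ,
        ((∀ i j, 0 ≤ B i j) ∧ (∀ i, ∑ j, B i j = 1) ∧ (∀ j, ∑ i, B i j = 1)) ∧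
        ∀ i, (ρ i i).re = ∑ j, B i j * hρ.eigenvalues j) ∧
    Majorizes (fun i => (ρ i i).re) hρ.eigenvalues := by
  set B := of fun i j => ‖(hρ.eigenvectorUnitary : Matrix (Fin n) (Fin n) ℂ) i j‖ ^ 2
  have hB : B ∈ doublyStochastic ℝ (Fin n) :=
    of_norm_sq_mem_doublyStochastic_of_mem_unitaryGroup hρ.eigenvectorUnitary.2
  have hdiag : (fun i => (ρ i i).re) = B *ᵥ hρ.eigenvalues :=
    funext hρ.re_apply_self_eq_sum_norm_sq_mul_eigenvalues
  refine ⟨⟨B, ⟨fun i j => nonneg_of_mem_doublyStochastic hB, sum_row_of_mem_doublyStochastic hB,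
    sum_col_of_mem_doublyStochastic hB⟩, fun i => congrFun hdiag i⟩, ?_⟩
  rw [hdiag]
  exact majorizes_mulVec_of_mem_doublyStochastic hB _
end

section
/- Let x, y ∈ ℝ^n be probability vectors (nonnegative entries summing to 1) with x majorized by y. Then the Shannon entropies satisfy H(x) ≥ H(y), where H(v) = -∑_i v_i log₂ v_i. -/
open Finset

/-!
Sort `x` and `y` decreasingly; the sums of the `k` largest entries become partial sums of the
sorted sequences. For the convex function `φ t = t log t`, the tangent line at `x i` gives
`∑ φ (y i) - ∑ φ (x i) ≥ ∑ φ' (x i) (y i - x i)`, and summation by parts rewrites the right side as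
a combination of the nonnegative partial-sum differences `∑_{i<k} (y i - x i)` with the nonnegative
weights `φ' (x k) - φ' (x (k+1))`. Where `x` vanishes `φ'` has no finite value; those positions are
cut off, since majorization forces the corresponding entries of `y` to vanish as well.
-/

open Real

theorem sum_range_mul_nonneg_of_antitoneOn {c d : ℕ → ℝ} {m : ℕ}
    (hc : AntitoneOn c (Set.Iio m)) (hd : ∀ k ≤ m, 0 ≤ ∑ i ∈ range k, d i)
    (hdm : ∑ i ∈ range m, d i = 0) :
    0 ≤ ∑ i ∈ range m, c i * d i := by
  simp_rw [← smul_eq_mul]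
  rw [sum_range_by_parts, hdm, smul_zero, zero_sub, neg_nonneg]
  refine sum_nonpos fun i hi => ?_
  have hi : i + 1 < m := by have := mem_range.1 hi; omega
  exact smul_nonpos_of_nonpos_of_nonneg
    (sub_nonpos.2 (hc (Nat.lt_of_succ_lt hi) hi i.le_succ)) (hd _ hi.le)

theorem Real.mul_log_add_le {a b : ℝ} (ha : 0 < a) (hb : 0 ≤ b) :
    a * log a + (log a + 1) * (b - a) ≤ b * log b := by
  rcases hb.eq_or_lt with rfl | hb
  · nlinarith
  · have := log_le_sub_one_of_pos (div_pos ha hb)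
    rw [log_div ha.ne' hb.ne', le_sub_iff_add_le, le_div_iff₀ hb] at this
    nlinarith

theorem sum_range_mul_log_le_of_sum_range_le {u v : ℕ → ℝ} {m : ℕ}
    (hu : ∀ i < m, 0 < u i) (hu_anti : AntitoneOn u (Set.Iio m)) (hv : ∀ i < m, 0 ≤ v i)
    (hsub : ∀ k ≤ m, ∑ i ∈ range k, u i ≤ ∑ i ∈ range k, v i)
    (htot : ∑ i ∈ range m, u i = ∑ i ∈ range m, v i) :
    ∑ i ∈ range m, u i * log (u i) ≤ ∑ i ∈ range m, v i * log (v i) := by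
  have hslope : AntitoneOn (fun i => log (u i) + 1) (Set.Iio m) := fun i hi j hj hij => by
    simpa using log_le_log (hu j hj) (hu_anti hi hj hij)
  have habel : 0 ≤ ∑ i ∈ range m, (log (u i) + 1) * (v i - u i) :=
    sum_range_mul_nonneg_of_antitoneOn hslope
      (fun k hk => by simpa [sum_sub_distrib] using hsub k hk)
      (by simp [sum_sub_distrib, htot])
  calc ∑ i ∈ range m, u i * log (u i)
      ≤ ∑ i ∈ range m, (u i * log (u i) + (log (u i) + 1) * (v i - u i)) := by
        rw [sum_add_distrib]; exact le_add_of_nonneg_right habel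
    _ ≤ ∑ i ∈ range m, v i * log (v i) := by
        refine sum_le_sum fun i hi => mul_log_add_le (hu i ?_) (hv i ?_) <;>
          exact mem_range.1 hi

theorem sum_range_mul_log_le_of_antitoneOn {u v : ℕ → ℝ} {n : ℕ}
    (hu : ∀ i < n, 0 ≤ u i) (hu_anti : AntitoneOn u (Set.Iio n)) (hv : ∀ i < n, 0 ≤ v i)
    (hsub : ∀ k ≤ n, ∑ i ∈ range k, u i ≤ ∑ i ∈ range k, v i)
    (htot : ∑ i ∈ range n, u i = ∑ i ∈ range n, v i) :
    ∑ i ∈ range n, u i * log (u i) ≤ ∑ i ∈ range n, v i * log (v i) := by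
  have hex : ∃ m, n ≤ m ∨ u m ≤ 0 := ⟨n, Or.inl le_rfl⟩
  set m := Nat.find hex
  have hmn : m ≤ n := Nat.find_min' hex (Or.inl le_rfl)
  have hu_pos : ∀ i < m, 0 < u i := fun i hi => not_le.1 (not_or.1 (Nat.find_min hex hi)).2
  have hu_tail : ∀ i ∈ Ico m n, u i = 0 := fun i hi => by
    obtain ⟨hmi, hin⟩ := mem_Ico.1 hi
    have hum : u m ≤ 0 := (Nat.find_spec hex).resolve_left (by omega)
    exact le_antisymm ((hu_anti (hmi.trans_lt hin) hin hmi).trans hum) (hu i hin)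
  have hsplit (w : ℕ → ℝ) : ∑ i ∈ range n, w i = ∑ i ∈ range m, w i + ∑ i ∈ Ico m n, w i :=
    (sum_range_add_sum_Ico w hmn).symm
  have hv_nonneg : ∀ i ∈ Ico m n, 0 ≤ v i := fun i hi => hv i (mem_Ico.1 hi).2
  rw [hsplit u, hsplit v, sum_eq_zero hu_tail, add_zero] at htot
  -- The first `m` entries of `v` already carry the whole mass of `u`.
  have hv_tail : ∀ i ∈ Ico m n, v i = 0 :=
    (sum_eq_zero_iff_of_nonneg hv_nonneg).1 (by linarith [hsub m hmn, sum_nonneg hv_nonneg])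
  rw [sum_eq_zero hv_tail, add_zero] at htot
  have hrestrict (w : ℕ → ℝ) (hw : ∀ i ∈ Ico m n, w i = 0) :
      ∑ i ∈ range n, w i * log (w i) = ∑ i ∈ range m, w i * log (w i) := by
    rw [hsplit, sum_eq_zero (s := Ico m n) fun i hi => by simp [hw i hi], add_zero]
  rw [hrestrict u hu_tail, hrestrict v hv_tail]
  exact sum_range_mul_log_le_of_sum_range_le hu_pos (hu_anti.mono (Set.Iio_subset_Iio hmn))
    (fun i hi => hv i (hi.trans_le hmn)) (fun k hk => hsub k (hk.trans hmn)) htot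

theorem Antitone.sum_le_sum_range_card {M : Type*} [AddCommMonoid M] [PartialOrder M]
    [IsOrderedAddMonoid M] {f : ℕ → M} (hf : Antitone f) (t : Finset ℕ) :
    ∑ i ∈ t, f i ≤ ∑ i ∈ range #t, f i := by
  have hout : ∑ i ∈ t \ range #t, f i ≤ #(t \ range #t) • f #t :=
    sum_le_card_nsmul _ _ _ fun i hi => hf (by simpa using (mem_sdiff.1 hi).2)
  have hin : #(range #t \ t) • f #t ≤ ∑ i ∈ range #t \ t, f i :=
    card_nsmul_le_sum _ _ _ fun i hi => hf (mem_range.1 (mem_sdiff.1 hi).1).le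
  rw [card_sdiff_comm (card_range _).symm] at hout
  rw [← sum_inter_add_sum_sdiff t (range #t), ← sum_inter_add_sum_sdiff (range #t) t, inter_comm]
  exact add_le_add_right (hout.trans hin) _

noncomputable def decreasingRearrangement {n : ℕ} (w : Fin n → ℝ) (i : ℕ) : ℝ :=
  if h : i < n then w (Tuple.sort (OrderDual.toDual ∘ w) ⟨i, h⟩) else 0

section decreasingRearrangement

variable {n : ℕ} (w : Fin n → ℝ)

local notation "σ" => Tuple.sort (OrderDual.toDual ∘ w)

theorem antitone_comp_sort_toDual : Antitone (w ∘ σ) :=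
  monotone_toDual_comp_iff.1 (Tuple.monotone_sort _)

theorem decreasingRearrangement_val (i : Fin n) : decreasingRearrangement w i = w (σ i) :=
  dif_pos i.2

theorem decreasingRearrangement_of_le {i : ℕ} (hi : n ≤ i) : decreasingRearrangement w i = 0 :=
  dif_neg hi.not_gt

theorem sum_range_decreasingRearrangement (g : ℝ → ℝ) :
    ∑ i ∈ range n, g (decreasingRearrangement w i) = ∑ i, g (w i) := by
  rw [← Fin.sum_univ_eq_sum_range]
  simp_rw [decreasingRearrangement_val]
  exact Equiv.sum_comp σ (g ∘ w)

variable {w}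

theorem decreasingRearrangement_nonneg (hw : ∀ i, 0 ≤ w i) (i : ℕ) :
    0 ≤ decreasingRearrangement w i := by
  unfold decreasingRearrangement
  split_ifs
  exacts [hw _, le_rfl]

theorem antitone_decreasingRearrangement (hw : ∀ i, 0 ≤ w i) :
    Antitone (decreasingRearrangement w) := by
  intro i j hij
  by_cases hj : j < n
  · simp only [decreasingRearrangement, dif_pos hj, dif_pos (hij.trans_lt hj)]
    exact antitone_comp_sort_toDual w (Fin.mk_le_mk.2 hij)
  · rw [decreasingRearrangement_of_le w (not_lt.1 hj)]
    exact decreasingRearrangement_nonneg hw i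

theorem kMaxSum_eq_sum_range_decreasingRearrangement (hw : ∀ i, 0 ≤ w i) {k : ℕ} (hk : k ≤ n) :
    kMaxSum w k = ∑ i ∈ range k, decreasingRearrangement w i := by
  have hfin : {t : ℝ | ∃ s : Finset (Fin n), #s = k ∧ t = ∑ i ∈ s, w i}.Finite :=
    (Set.finite_range fun s : Finset (Fin n) => ∑ i ∈ s, w i).subset
      fun t ⟨s, _, hs⟩ => ⟨s, hs.symm⟩
  have hfirst : ∑ i ∈ range k, decreasingRearrangement w i =
      ∑ i ∈ (univ.map (Fin.castLEEmb hk)).map (σ).toEmbedding, w i := by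
    rw [sum_map, sum_map, ← Fin.sum_univ_eq_sum_range]
    exact sum_congr rfl fun j _ => decreasingRearrangement_val w (Fin.castLE hk j)
  refine le_antisymm (csSup_le ?_ ?_) (le_csSup hfin.bddAbove ⟨_, by simp, hfirst⟩)
  · exact ⟨_, _, by simp, hfirst⟩
  · rintro _ ⟨s, rfl, rfl⟩
    calc ∑ i ∈ s, w i
        = ∑ i ∈ (s.map (σ).symm.toEmbedding).map Fin.valEmbedding, decreasingRearrangement w i := by
          simp [sum_map, decreasingRearrangement_val]
      _ ≤ ∑ i ∈ range #s, decreasingRearrangement w i := by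
          simpa using (antitone_decreasingRearrangement hw).sum_le_sum_range_card
            ((s.map (σ).symm.toEmbedding).map Fin.valEmbedding)

end decreasingRearrangement

theorem Majorizes.sum_mul_log_le {n : ℕ} {x y : Fin n → ℝ} (hxy : Majorizes x y)
    (hx : ∀ i, 0 ≤ x i) (hy : ∀ i, 0 ≤ y i) :
    ∑ i, x i * log (x i) ≤ ∑ i, y i * log (y i) := by
  have hsub : ∀ k ≤ n, ∑ i ∈ range k, decreasingRearrangement x i ≤
      ∑ i ∈ range k, decreasingRearrangement y i := by
    intro k hk
    rcases k.eq_zero_or_pos with rfl | hk0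
    · simp
    rw [← kMaxSum_eq_sum_range_decreasingRearrangement hx hk,
      ← kMaxSum_eq_sum_range_decreasingRearrangement hy hk]
    exact hxy.1 k hk0 hk
  have htot : ∑ i ∈ range n, decreasingRearrangement x i =
      ∑ i ∈ range n, decreasingRearrangement y i := by
    simpa only [sum_range_decreasingRearrangement _ fun t => t] using hxy.2
  simpa only [sum_range_decreasingRearrangement _ fun t => t * log t] using
    sum_range_mul_log_le_of_antitoneOn (fun i _ => decreasingRearrangement_nonneg hx i)
      ((antitone_decreasingRearrangement hx).antitoneOn _)
      (fun i _ => decreasingRearrangement_nonneg hy i) hsub htot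

theorem stmt7_general (n : ℕ) (x y : Fin n → ℝ)
    (hx0 : ∀ i, 0 ≤ x i) (hy0 : ∀ i, 0 ≤ y i)
    (hxy : Majorizes x y) :
    -∑ i, y i * Real.logb 2 (y i) ≤ -∑ i, x i * Real.logb 2 (x i) := by
  simp only [Real.logb, mul_div_assoc', ← sum_div]
  exact neg_le_neg <|
    div_le_div_of_nonneg_right (hxy.sum_mul_log_le hx0 hy0) (log_nonneg one_le_two)

theorem stmt7 (n : ℕ) (x y : Fin n → ℝ)
    (hx0 : ∀ i, 0 ≤ x i) (hy0 : ∀ i, 0 ≤ y i)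
    (hx1 : ∑ i, x i = 1) (hy1 : ∑ i, y i = 1)
    (hxy : Majorizes x y) :
    -∑ i, y i * Real.logb 2 (y i) ≤ -∑ i, x i * Real.logb 2 (x i) :=
  stmt7_general n x y hx0 hy0 hxy
end

section
/- Let N ≥ 2 and define on (ℂ²)^{⊗N} the Kramers–Wannier dual operators μ_j^x = ∏_{i=0}^{j} σ_i^z and μ_j^z = σ_{j+1}^x σ_j^x for 0 ≤ j ≤ N-2. Then these operators satisfy the Pauli algebra on the dual lattice: (μ_j^x)² = I, (μ_j^z)² = I, μ_j^x μ_j^z = -μ_j^z μ_j^x for each j, and μ_j^x μ_k^z = μ_k^z μ_j^x whenever j ≠ k. -/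
open Finset

def pauliZ : Matrix (Fin 2) (Fin 2) ℂ := !![1, 0; 0, -1]
def pauliX : Matrix (Fin 2) (Fin 2) ℂ := !![0, 1; 1, 0]

/-- The single-site operator `A` acting on site `j` of the chain (identity on
all other sites). -/
def siteOp (N : ℕ) (j : Fin N) (A : Matrix (Fin 2) (Fin 2) ℂ) :
    Matrix (Fin N → Fin 2) (Fin N → Fin 2) ℂ :=
  fun s t => ∏ i, if i = j then A (s i) (t i) else (if s i = t i then 1 else 0)

/-- The Kramers–Wannier dual operator `μ_j^x = ∏_{i=0}^{j} σ_i^z`. -/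
noncomputable def muX (N : ℕ) (j : Fin N) :
    Matrix (Fin N → Fin 2) (Fin N → Fin 2) ℂ :=
  (((List.finRange N).filter (fun i => i ≤ j)).map (fun i => siteOp N i pauliZ)).prod

/-- The Kramers–Wannier dual operator `μ_j^z = σ_{j+1}^x σ_j^x` (here `j + 1`
is the literal successor, defined for `0 ≤ j ≤ N-2`). -/
noncomputable def muZ (N : ℕ) (j : Fin N) (h : j.val + 1 < N) :
    Matrix (Fin N → Fin 2) (Fin N → Fin 2) ℂ :=
  siteOp N ⟨j.val + 1, h⟩ pauliX * siteOp N j pauliX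

lemma siteOp_mul_apply (N : ℕ) (j k : Fin N) (A B : Matrix (Fin 2) (Fin 2) ℂ)
    (s t : Fin N → Fin 2) :
    (siteOp N j A * siteOp N k B) s t =
    ∏ i, ∑ v : Fin 2, (if i = j then A (s i) v else if s i = v then 1 else 0) *
        (if i = k then B v (t i) else if v = t i then 1 else 0) := by
  rw [Matrix.mul_apply, Finset.prod_univ_sum]
  rw [Fintype.piFinset_univ]
  simp only [siteOp, ← Finset.prod_mul_distrib]

lemma siteOp_mul_same (N : ℕ) (j : Fin N) (A B : Matrix (Fin 2) (Fin 2) ℂ) :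
    siteOp N j A * siteOp N j B = siteOp N j (A * B) := by
  ext s t
  rw [siteOp_mul_apply, siteOp]
  refine Finset.prod_congr rfl fun i _ => ?_
  by_cases h : i = j
  · simp [h, Matrix.mul_apply]
  · simp [h]

lemma siteOp_mul_comm (N : ℕ) (j k : Fin N) (h : j ≠ k)
    (A B : Matrix (Fin 2) (Fin 2) ℂ) :
    siteOp N j A * siteOp N k B = siteOp N k B * siteOp N j A := by
  ext s t
  rw [siteOp_mul_apply, siteOp_mul_apply]
  refine Finset.prod_congr rfl fun i _ => ?_
  by_cases hj : i = j
  · subst hj; simp [h, Ne.symm h]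
  · by_cases hk : i = k <;> simp [hj, hk, Ne.symm h]

lemma siteOp_one (N : ℕ) (j : Fin N) : siteOp N j (1 : Matrix (Fin 2) (Fin 2) ℂ) = 1 := by
  ext s t
  simp only [siteOp, Matrix.one_apply]
  by_cases h : s = t
  · subst h; simp
  · rw [if_neg h]
    obtain ⟨i, hi⟩ := Function.ne_iff.mp h
    exact Finset.prod_eq_zero (mem_univ i) (by simp [hi])

lemma siteOp_neg (N : ℕ) (j : Fin N) (A : Matrix (Fin 2) (Fin 2) ℂ) :
    siteOp N j (-A) = - siteOp N j A := by
  ext s t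
  simp only [siteOp, Matrix.neg_apply]
  rw [Finset.prod_eq_mul_prod_sdiff_singleton_of_mem (mem_univ j),
      Finset.prod_eq_mul_prod_sdiff_singleton_of_mem (mem_univ j)]
  rw [if_pos rfl, if_pos rfl, neg_mul, neg_inj]
  refine congrArg _ (Finset.prod_congr rfl fun i hi => ?_)
  have h : ¬ i = j := by simpa using (Finset.mem_sdiff.mp hi).2
  rw [if_neg h, if_neg h]

lemma pauliZ_sq : pauliZ * pauliZ = 1 := by
  ext i j
  fin_cases i <;> fin_cases j <;>
    simp [pauliZ, Matrix.mul_apply, Fin.sum_univ_two, Matrix.one_apply]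

lemma pauliX_sq : pauliX * pauliX = 1 := by
  ext i j
  fin_cases i <;> fin_cases j <;>
    simp [pauliX, Matrix.mul_apply, Fin.sum_univ_two, Matrix.one_apply]

lemma pauliZX : pauliZ * pauliX = -(pauliX * pauliZ) := by
  ext i j
  fin_cases i <;> fin_cases j <;>
    simp [pauliZ, pauliX, Matrix.mul_apply, Fin.sum_univ_two]

lemma commute_prod (N : ℕ) (l : List (Fin N)) (m : Fin N) (hm : m ∉ l)
    (X : Matrix (Fin 2) (Fin 2) ℂ) :
    Commute (siteOp N m X) ((l.map (fun i => siteOp N i pauliZ)).prod) := by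
  apply Commute.list_prod_right
  intro x hx
  obtain ⟨i, hi, rfl⟩ := List.mem_map.mp hx
  exact siteOp_mul_comm N m i (fun h => hm (h ▸ hi)) X pauliZ

lemma prod_sq (N : ℕ) (l : List (Fin N)) (hl : l.Nodup) :
    ((l.map (fun i => siteOp N i pauliZ)).prod) *
      ((l.map (fun i => siteOp N i pauliZ)).prod) = 1 := by
  induction l with
  | nil => simp
  | cons a l ih =>
    rw [List.map_cons, List.prod_cons]
    have hml : a ∉ l := (List.nodup_cons.mp hl).1
    have hc := (commute_prod N l a hml pauliZ).eq
    rw [mul_assoc, ← mul_assoc ((l.map (fun i => siteOp N i pauliZ)).prod), ← hc,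
      mul_assoc (siteOp N a pauliZ), ← mul_assoc, siteOp_mul_same, pauliZ_sq, siteOp_one,
      one_mul, ih (List.nodup_cons.mp hl).2]

lemma prod_anticomm (N : ℕ) (l : List (Fin N)) (hl : l.Nodup) (m : Fin N) (hm : m ∈ l) :
    (l.map (fun i => siteOp N i pauliZ)).prod * siteOp N m pauliX
    = -(siteOp N m pauliX * (l.map (fun i => siteOp N i pauliZ)).prod) := by
  induction l with
  | nil => simp at hm
  | cons a l ih =>
    rw [List.map_cons, List.prod_cons]
    rcases List.mem_cons.mp hm with rfl | hm'
    · have hml : m ∉ l := (List.nodup_cons.mp hl).1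
      have hc := (commute_prod N l m hml pauliX).eq
      rw [mul_assoc, ← hc, ← mul_assoc, siteOp_mul_same, pauliZX, siteOp_neg,
        ← siteOp_mul_same, neg_mul, mul_assoc]
    · have ham : a ≠ m := fun h => (List.nodup_cons.mp hl).1 (h ▸ hm')
      rw [mul_assoc, ih (List.nodup_cons.mp hl).2 hm', mul_neg, ← mul_assoc,
        siteOp_mul_comm N a m ham, mul_assoc]

lemma mem_filter_le (N : ℕ) (j i : Fin N) :
    i ∈ (List.finRange N).filter (fun i => i ≤ j) ↔ i ≤ j := by
  simp [List.mem_filter]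

lemma nodup_filter_le (N : ℕ) (j : Fin N) :
    ((List.finRange N).filter (fun i => i ≤ j)).Nodup :=
  (List.nodup_finRange N).filter _

lemma sq_helper {M : Type*} [Monoid M] {a b : M} (h : a * b = b * a)
    (ha : a * a = 1) (hb : b * b = 1) : a * b * (a * b) = 1 := by
  rw [mul_assoc, ← mul_assoc b, ← h, mul_assoc a b b, hb, mul_one, ha]

theorem stmt12 (N : ℕ) (hN : 2 ≤ N) :
    (∀ (j : Fin N), j.val + 1 < N → muX N j * muX N j = 1) ∧
    (∀ (j : Fin N) (hj : j.val + 1 < N), muZ N j hj * muZ N j hj = 1) ∧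
    (∀ (j : Fin N) (hj : j.val + 1 < N),
      muX N j * muZ N j hj = -(muZ N j hj * muX N j)) ∧
    (∀ (j k : Fin N) (_ : j.val + 1 < N) (hk : k.val + 1 < N), j ≠ k →
      muX N j * muZ N k hk = muZ N k hk * muX N j) := by
  refine ⟨fun j _ => prod_sq N _ (nodup_filter_le N j), fun j hj => ?_, fun j hj => ?_,
    fun j k _ hk hne => ?_⟩
  · have hne : (⟨j.val + 1, hj⟩ : Fin N) ≠ j := by simp [Fin.ext_iff]
    exact sq_helper (siteOp_mul_comm N _ _ hne pauliX pauliX)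
      (by rw [siteOp_mul_same, pauliX_sq, siteOp_one])
      (by rw [siteOp_mul_same, pauliX_sq, siteOp_one])
  · have hA := (commute_prod N _ (⟨j.val + 1, hj⟩ : Fin N)
      (fun hmem => by simpa [Fin.le_def] using (mem_filter_le N j _).mp hmem) pauliX).eq
    have hB := prod_anticomm N _ (nodup_filter_le N j) j ((mem_filter_le N j j).mpr le_rfl)
    rw [muX, muZ, ← mul_assoc, ← hA, mul_assoc, hB, mul_neg, ← mul_assoc]
  · rw [muX, muZ]
    rcases lt_or_gt_of_ne hne with hlt | hlt
    · -- j < k : no overlap, commute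
      have hA := (commute_prod N _ (⟨k.val + 1, hk⟩ : Fin N)
        (fun hmem => by
          have h1 := (mem_filter_le N j _).mp hmem
          simp only [Fin.le_def] at h1
          rw [Fin.lt_def] at hlt
          omega) pauliX).eq
      have hB := (commute_prod N _ k
        (fun hmem => absurd ((mem_filter_le N j _).mp hmem) (not_le.mpr hlt)) pauliX).eq
      rw [← mul_assoc, ← hA, mul_assoc, ← hB, ← mul_assoc]
    · -- k < j : both k and k+1 in list, two anticommutations
      have hA := prod_anticomm N _ (nodup_filter_le N j) (⟨k.val + 1, hk⟩ : Fin N)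
        ((mem_filter_le N j _).mpr (by rw [Fin.le_def]; exact hlt))
      have hB := prod_anticomm N _ (nodup_filter_le N j) k
        ((mem_filter_le N j _).mpr hlt.le)
      rw [← mul_assoc, hA, neg_mul, mul_assoc, hB, mul_neg, neg_neg, ← mul_assoc]
end
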